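/- In any full second-order propositional Kripke model, the second-order encoding of the propositional existential quantifier is semantically correct: K₂, σ, p ⊩ ∀X (∀χ (A → X) → X) if and only if there exists π ∈ Π_{0,p} such that K₂, σ[χ:=π], p ⊩ A (with X not free in A). -/

import Mathlib

namespace SOPC

/-- Second-order propositional formulas: propositional variables, implication,
and quantification over propositional (arity-0 second-order) variables. -/
inductive PF : Type
  | var : ℕ → PF
  | imp : PF → PF → PF
  | all : ℕ → PF → PF

/-- Free propositional variables. -/
def fvP : PF → Finset ℕ
  | .var X => {X}
  | .imp A B => fvP A ∪ fvP B
  | .all X A => (fvP A).erase X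

/-- A second-order propositional Kripke model over the poset of worlds `W`:
`Pi p` is the set of monotone `{0,1}`-valued interpretations available at
world `p` (represented as monotone-above-`p` functions `W → Prop`). -/
structure PModel (W : Type) [PartialOrder W] where
  Pi : W → Set (W → Prop)
  piNe : ∀ p, (Pi p).Nonempty
  piMono : ∀ p π, π ∈ Pi p → ∀ {q q' : W}, p ≤ q → q ≤ q' → π q → π q'
  piRes : ∀ {p q : W}, p ≤ q → Pi p ⊆ Pi q

/-- Kripke forcing for second-order propositional formulas. -/
def PForces {W : Type} [PartialOrder W] (M : PModel W) :
    (ℕ → W → Prop) → W → PF → Prop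
  | σ, p, .var X => σ X p
  | σ, p, .imp A B => ∀ q, p ≤ q → PForces M σ q A → PForces M σ q B
  | σ, p, .all X A => ∀ q, p ≤ q → ∀ π ∈ M.Pi q, PForces M (Function.update σ X π) q A

/-- The model is full: `Pi p` consists of *all* functions monotone above `p`. -/
def PModel.Full {W : Type} [PartialOrder W] (M : PModel W) : Prop :=
  ∀ p, M.Pi p = {π | ∀ q q' : W, p ≤ q → q ≤ q' → π q → π q'}

end SOPC

/-!
If `A` is forced at `p` for some `χ := π`, then instantiating the premise `∀χ (A → X)` at `π`
yields `X`. Conversely, fullness lets us instantiate `X` with the strongest candidate, the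
predicate "`A` is forced at `q` for some `χ := φ` with `φ ∈ Π_{0,q}`": it is monotone by
persistence, the premise `∀χ (A → X)` holds for it by construction, and so `X` at `p` yields
the required witness.
-/

namespace SOPC

open Function

variable {W : Type} [PartialOrder W]

def MonoAbove (p : W) (f : W → Prop) : Prop :=
  ∀ q q' : W, p ≤ q → q ≤ q' → f q → f q'

theorem MonoAbove.mono {p q : W} {f : W → Prop} (hf : MonoAbove p f) (hpq : p ≤ q) :
    MonoAbove q f :=
  fun r r' hqr hrr' => hf r r' (hpq.trans hqr) hrr'

theorem monoAbove_update {p : W} {σ : ℕ → W → Prop} (hσ : ∀ Y, MonoAbove p (σ Y))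
    (χ : ℕ) {π : W → Prop} (hπ : MonoAbove p π) (Y : ℕ) : MonoAbove p (update σ χ π Y) := by
  rcases eq_or_ne Y χ with rfl | hYχ
  · rwa [update_self]
  · rw [update_of_ne hYχ]
    exact hσ Y

namespace PModel

theorem monoAbove_of_mem (M : PModel W) {p : W} {π : W → Prop} (hπ : π ∈ M.Pi p) :
    MonoAbove p π :=
  fun _ _ hpq hqq' => M.piMono p π hπ hpq hqq'

theorem Full.mem_iff {M : PModel W} (hfull : M.Full) {p : W} {π : W → Prop} :
    π ∈ M.Pi p ↔ MonoAbove p π := by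
  rw [hfull p]
  rfl

end PModel

section Forcing

variable (M : PModel W)

theorem forces_congr {σ σ' : ℕ → W → Prop} (A : PF) (h : ∀ Y ∈ fvP A, σ Y = σ' Y) (p : W) :
    PForces M σ p A ↔ PForces M σ' p A := by
  induction A generalizing σ σ' p with
  | var X => exact iff_of_eq (congrFun (h X (Finset.mem_singleton_self X)) p)
  | imp A B ihA ihB =>
    have hA := ihA fun Y hY => h Y (Finset.mem_union_left _ hY)
    have hB := ihB fun Y hY => h Y (Finset.mem_union_right _ hY)
    simp only [PForces, hA, hB]
  | all Z A ih =>
    refine forall₂_congr fun q _ => forall₂_congr fun π _ => ih (fun Y hY => ?_) q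
    rcases eq_or_ne Y Z with rfl | hYZ
    · simp only [update_self]
    · simp only [update_of_ne hYZ]
      exact h Y (Finset.mem_erase.2 ⟨hYZ, hY⟩)

theorem forces_update_of_not_mem {σ : ℕ → W → Prop} {A : PF} {X : ℕ} (hXA : X ∉ fvP A)
    (ρ : W → Prop) (p : W) : PForces M (update σ X ρ) p A ↔ PForces M σ p A :=
  forces_congr M A (fun _ hY => update_of_ne (ne_of_mem_of_not_mem hY hXA) ρ σ) p

theorem forces_mono {σ : ℕ → W → Prop} {p q : W} (hσ : ∀ Y, MonoAbove p (σ Y)) (hpq : p ≤ q)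
    {A : PF} (hA : PForces M σ p A) : PForces M σ q A := by
  cases A with
  | var X => exact hσ X p q le_rfl hpq hA
  | imp A B => exact fun r hr => hA r (hpq.trans hr)
  | all Z A => exact fun r hr => hA r (hpq.trans hr)

def ForcesEx (σ : ℕ → W → Prop) (χ : ℕ) (A : PF) (q : W) : Prop :=
  ∃ φ ∈ M.Pi q, PForces M (update σ χ φ) q A

theorem monoAbove_forcesEx {σ : ℕ → W → Prop} {p : W} (hσ : ∀ Y, MonoAbove p (σ Y))
    (χ : ℕ) (A : PF) : MonoAbove p (ForcesEx M σ χ A) := by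
  rintro q q' hpq hqq' ⟨φ, hφ, hA⟩
  have hσφ := monoAbove_update (fun Y => (hσ Y).mono hpq) χ (M.monoAbove_of_mem hφ)
  exact ⟨φ, M.piRes hqq' hφ, forces_mono M hσφ hqq' hA⟩

def PF.exEnc (X χ : ℕ) (A : PF) : PF :=
  .all X (.imp (.all χ (.imp A (.var X))) (.var X))

theorem forces_exEnc_of_forcesEx {σ : ℕ → W → Prop} {p : W} (hσ : ∀ Y, MonoAbove p (σ Y))
    {A : PF} {X χ : ℕ} (hXA : X ∉ fvP A) (hXχ : X ≠ χ)
    (hex : ForcesEx M σ χ A p) : PForces M σ p (.exEnc X χ A) := by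
  obtain ⟨π, hπ, hA⟩ := hex
  intro q hpq ρ _ r hqr hprem
  have hpr := hpq.trans hqr
  have hAr : PForces M (update (update σ X ρ) χ π) r A := by
    rw [update_comm hXχ, forces_update_of_not_mem M hXA]
    exact forces_mono M (monoAbove_update hσ χ (M.monoAbove_of_mem hπ)) hpr hA
  have hXr := hprem r le_rfl π (M.piRes hpr hπ) r le_rfl hAr
  simpa only [PForces, update_of_ne hXχ, update_self] using hXr

theorem forcesEx_of_forces_exEnc (hfull : M.Full) {σ : ℕ → W → Prop} {p : W}
    (hσ : ∀ Y, MonoAbove p (σ Y)) {A : PF} {X χ : ℕ} (hXA : X ∉ fvP A) (hXχ : X ≠ χ)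
    (henc : PForces M σ p (.exEnc X χ A)) : ForcesEx M σ χ A p := by
  have hwit : ForcesEx M σ χ A ∈ M.Pi p := hfull.mem_iff.2 (monoAbove_forcesEx M hσ χ A)
  have hprem : PForces M (update σ X (ForcesEx M σ χ A)) p (.all χ (.imp A (.var X))) := by
    intro q _ φ hφ r hqr hA
    show update (update σ X _) χ φ X r
    rw [update_of_ne hXχ, update_self]
    rw [update_comm hXχ, forces_update_of_not_mem M hXA] at hA
    exact ⟨φ, M.piRes hqr hφ, hA⟩
  have hXp := henc p le_rfl _ hwit p le_rfl hprem
  simpa only [PForces, update_self] using hXp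

end Forcing

/-- In a full second-order propositional Kripke model, the
second-order encoding `∀X (∀χ (A → X) → X)` of the propositional existential
quantifier is semantically correct. -/
theorem ex_encoding_correct {W : Type} [PartialOrder W] (M : PModel W)
    (hfull : M.Full) (σ : ℕ → W → Prop) (p : W) (hσ : ∀ Y, σ Y ∈ M.Pi p)
    (A : PF) (X χ : ℕ) (hXA : X ∉ fvP A) (hXχ : X ≠ χ) :
    PForces M σ p (.all X (.imp (.all χ (.imp A (.var X))) (.var X))) ↔
      ∃ π ∈ M.Pi p, PForces M (Function.update σ χ π) p A := by
  have hσ' : ∀ Y, MonoAbove p (σ Y) := fun Y => M.monoAbove_of_mem (hσ Y)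
  exact ⟨forcesEx_of_forces_exEnc M hfull hσ' hXA hXχ, forces_exEnc_of_forcesEx M hσ' hXA hXχ⟩

end SOPC
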